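/- Let G be a finite group, A a unital C*-algebra and α an action of G on A. Then the action α is approximately representable in the sense of Izumi if and only if the induced coaction of C(G) on A, a ↦ Σ_{t∈G} α_t(a)⊗δ_t, is approximately representable. -/

import Mathlib

/- ------------------------------------------------------------------
   Common framework: finite dimensional C*-Hopf algebras, (twisted)
   coactions, crossed products, sequence algebras A^∞, Rohlin property.
   ------------------------------------------------------------------ -/

set_option linter.unusedSectionVars false
set_option maxHeartbeats 1000000
set_option synthInstance.maxHeartbeats 100000

open scoped TensorProduct
open Filter

noncomputable section

namespace Paper

/-- Slice the right tensor factor with a linear functional. -/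
def rmap {M Q : Type*} [AddCommGroup M] [Module ℂ M] [AddCommGroup Q] [Module ℂ Q]
    (f : Q →ₗ[ℂ] ℂ) : M ⊗[ℂ] Q →ₗ[ℂ] M :=
  (TensorProduct.rid ℂ M).toLinearMap.comp (TensorProduct.map LinearMap.id f)

@[simp] lemma rmap_tmul {M Q : Type*} [AddCommGroup M] [Module ℂ M] [AddCommGroup Q]
    [Module ℂ Q] (f : Q →ₗ[ℂ] ℂ) (x : M) (q : Q) :
    rmap f (x ⊗ₜ[ℂ] q) = f q • x := by
  simp [rmap]

/-- Slice the left tensor factor with a linear functional. -/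
def lmap {M Q : Type*} [AddCommGroup M] [Module ℂ M] [AddCommGroup Q] [Module ℂ Q]
    (f : M →ₗ[ℂ] ℂ) : M ⊗[ℂ] Q →ₗ[ℂ] Q :=
  (TensorProduct.lid ℂ Q).toLinearMap.comp (TensorProduct.map f LinearMap.id)

/-- `rmap` as a linear map in the functional. -/
def rmapL (M Q : Type*) [AddCommGroup M] [Module ℂ M] [AddCommGroup Q] [Module ℂ Q] :
    (Q →ₗ[ℂ] ℂ) →ₗ[ℂ] (M ⊗[ℂ] Q →ₗ[ℂ] M) where
  toFun f := rmap f
  map_add' f g := TensorProduct.ext' (fun x q => by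
    simp [rmap_tmul, add_smul])
  map_smul' c f := TensorProduct.ext' (fun x q => by
    simp [rmap_tmul, smul_smul])

/-- `st` is the canonical star operation on a tensor product, given star
operations on the two factors. -/
def IsTensorStarMap {M N : Type*} [AddCommGroup M] [Module ℂ M] [AddCommGroup N] [Module ℂ N]
    (stM : M → M) (stN : N → N) (st : M ⊗[ℂ] N → M ⊗[ℂ] N) : Prop :=
  (∀ x y, st (x + y) = st x + st y) ∧
    ∀ (a : M) (b : N), st (a ⊗ₜ[ℂ] b) = stM a ⊗ₜ[ℂ] stN b

/-- `u` is a unitary with respect to the involution `st`. -/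
def IsUnitaryWith {C : Type*} [Monoid C] (st : C → C) (u : C) : Prop :=
  st u * u = 1 ∧ u * st u = 1

/-- The Haar (distinguished) projection of a C*-Hopf algebra. -/
structure IsHaarProjection {P : Type*} [Ring P] [Algebra ℂ P] [StarRing P]
    (εP : P →ₗ[ℂ] ℂ) (e : P) : Prop where
  star_self : star e = e
  idem : e * e = e
  counit_eq_one : εP e = 1
  absorb_left : ∀ p : P, p * e = εP p • e
  absorb_right : ∀ p : P, e * p = εP p • e

/-- A finite dimensional C*-Hopf algebra structure on `H` : comultiplication `Δ`
(a unital algebra homomorphism), counit `ε`, antipode `S`, a star operation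
`stH` on `H ⊗ H`, and distinguished (Haar) projection `e`. -/
structure IsCStarHopf (H : Type*) [Ring H] [Algebra ℂ H] [StarRing H] [FiniteDimensional ℂ H]
    (Δ : H →ₐ[ℂ] H ⊗[ℂ] H) (ε : H →ₐ[ℂ] ℂ) (S : H →ₗ[ℂ] H)
    (stH : H ⊗[ℂ] H → H ⊗[ℂ] H) (e : H) : Prop where
  coassoc : ∀ h, (Algebra.TensorProduct.map Δ (AlgHom.id ℂ H)) (Δ h)
      = (Algebra.TensorProduct.assoc ℂ ℂ ℂ H H H).symm ((Algebra.TensorProduct.map (AlgHom.id ℂ H) Δ) (Δ h))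
  counit_left : ∀ h, lmap ε.toLinearMap (Δ h) = h
  counit_right : ∀ h, rmap ε.toLinearMap (Δ h) = h
  antipode_left : ∀ h, LinearMap.mul' ℂ H ((TensorProduct.map S LinearMap.id) (Δ h)) = ε h • 1
  antipode_right : ∀ h, LinearMap.mul' ℂ H ((TensorProduct.map LinearMap.id S) (Δ h)) = ε h • 1
  star_tensor : IsTensorStarMap (star) (star) stH
  comul_star : ∀ h, Δ (star h) = stH (Δ h)
  counit_star : ∀ h, ε (star h) = star (ε h)
  cstar_embed : ∃ (n : ℕ) (φ : H →⋆ₐ[ℂ] Matrix (Fin n) (Fin n) ℂ), Function.Injective φ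
  haar : IsHaarProjection ε.toLinearMap e

/-- A (bialgebra) pairing between two Hopf algebras `P` and `Q`. -/
structure IsHopfPairing {P Q : Type*} [Ring P] [Algebra ℂ P] [Ring Q] [Algebra ℂ Q]
    (ΔP : P →ₗ[ℂ] P ⊗[ℂ] P) (εP : P →ₗ[ℂ] ℂ) (ΔQ : Q →ₗ[ℂ] Q ⊗[ℂ] Q) (εQ : Q →ₗ[ℂ] ℂ)
    (pair : P →ₗ[ℂ] Q →ₗ[ℂ] ℂ) : Prop where
  pair_mul_left : ∀ (p p' : P) (q : Q),
    pair (p * p') q = TensorProduct.lid ℂ ℂ (TensorProduct.map (pair p) (pair p') (ΔQ q))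
  pair_mul_right : ∀ (p : P) (q q' : Q),
    pair p (q * q') = TensorProduct.lid ℂ ℂ (TensorProduct.map (pair.flip q) (pair.flip q') (ΔP p))
  pair_one_left : ∀ q, pair 1 q = εQ q
  pair_one_right : ∀ p, pair p 1 = εP p
  nondeg_left : ∀ p, (∀ q, pair p q = 0) → p = 0
  nondeg_right : ∀ q, (∀ p, pair p q = 0) → q = 0

/-- `Q` (with data `ΔQ, εQ, SQ`) is the dual C*-Hopf algebra of `P`
(with data `ΔP, εP, SP`) with respect to the pairing `pair`. -/
structure IsDualPair {P Q : Type*} [Ring P] [Algebra ℂ P] [Ring Q] [Algebra ℂ Q]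
    (ΔP : P →ₐ[ℂ] P ⊗[ℂ] P) (εP : P →ₐ[ℂ] ℂ) (SP : P →ₗ[ℂ] P)
    (ΔQ : Q →ₐ[ℂ] Q ⊗[ℂ] Q) (εQ : Q →ₐ[ℂ] ℂ) (SQ : Q →ₗ[ℂ] Q)
    (pair : P →ₗ[ℂ] Q →ₗ[ℂ] ℂ) : Prop where
  pairing : IsHopfPairing ΔP.toLinearMap εP.toLinearMap ΔQ.toLinearMap εQ.toLinearMap pair
  antipode_compat : ∀ p q, pair (SP p) q = pair p (SQ q)

section Coactions

variable {A Q : Type*} [Ring A] [Algebra ℂ A] [StarRing A] [Ring Q] [Algebra ℂ Q]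

/-- A weak coaction of the C*-Hopf algebra `Q` on `A` : a unital `*`-homomorphism
`ρ : A → A ⊗ Q` with `(id ⊗ ε) ∘ ρ = id`.  (`st` is the star operation of `A ⊗ Q`.) -/
structure IsWeakCoaction (εQ : Q →ₗ[ℂ] ℂ) (st : A ⊗[ℂ] Q → A ⊗[ℂ] Q)
    (ρ : A →ₐ[ℂ] A ⊗[ℂ] Q) : Prop where
  star_hom : ∀ a, ρ (star a) = st (ρ a)
  counital : ∀ a, rmap εQ (ρ a) = a

/-- A coaction of `Q` on `A`. -/
structure IsCoaction (ΔQ : Q →ₐ[ℂ] Q ⊗[ℂ] Q) (εQ : Q →ₗ[ℂ] ℂ)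
    (st : A ⊗[ℂ] Q → A ⊗[ℂ] Q) (ρ : A →ₐ[ℂ] A ⊗[ℂ] Q) extends
      IsWeakCoaction εQ st ρ : Prop where
  coassoc : ∀ a, (Algebra.TensorProduct.map ρ (AlgHom.id ℂ Q)) (ρ a)
      = (Algebra.TensorProduct.assoc ℂ ℂ ℂ A Q Q).symm
          ((Algebra.TensorProduct.map (AlgHom.id ℂ A) ΔQ) (ρ a))

/-- A twisted coaction `(ρ, u)` of `Q` on `A` (Definition 2.1 of the paper).
`st` and `st2` are the star operations on `A ⊗ Q` and `(A ⊗ Q) ⊗ Q`. -/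
structure IsTwistedCoaction (ΔQ : Q →ₐ[ℂ] Q ⊗[ℂ] Q) (εQ : Q →ₗ[ℂ] ℂ)
    (st : A ⊗[ℂ] Q → A ⊗[ℂ] Q) (st2 : (A ⊗[ℂ] Q) ⊗[ℂ] Q → (A ⊗[ℂ] Q) ⊗[ℂ] Q)
    (ρ : A →ₐ[ℂ] A ⊗[ℂ] Q) (u : (A ⊗[ℂ] Q) ⊗[ℂ] Q) extends
      IsWeakCoaction εQ st ρ : Prop where
  unitary : IsUnitaryWith st2 u
  twisted_coassoc : ∀ a, (Algebra.TensorProduct.map ρ (AlgHom.id ℂ Q)) (ρ a)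
      = u * (Algebra.TensorProduct.assoc ℂ ℂ ℂ A Q Q).symm
          ((Algebra.TensorProduct.map (AlgHom.id ℂ A) ΔQ) (ρ a)) * st2 u
  cocycle :
    (u ⊗ₜ[ℂ] (1 : Q)) *
      (TensorProduct.map
        ((TensorProduct.assoc ℂ A Q Q).symm.toLinearMap ∘ₗ
          (TensorProduct.map LinearMap.id ΔQ.toLinearMap)) LinearMap.id u)
    = (TensorProduct.map (TensorProduct.map ρ.toLinearMap LinearMap.id) LinearMap.id u) *
      ((TensorProduct.assoc ℂ (A ⊗[ℂ] Q) Q Q).symm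
        (TensorProduct.map LinearMap.id ΔQ.toLinearMap u))
  counital_mid : ∀ φ : Module.Dual ℂ Q, rmap φ (rmap εQ u) = φ 1 • 1
  counital_right : ∀ φ : Module.Dual ℂ Q,
    rmap φ (TensorProduct.map (rmap εQ) LinearMap.id u) = φ 1 • 1

end Coactions

section CrossedProduct

variable {A P Q C : Type*}
  [Ring A] [Algebra ℂ A] [StarRing A]
  [Ring P] [Algebra ℂ P]
  [Ring Q] [Algebra ℂ Q]
  [Ring C] [Algebra ℂ C] [StarRing C]

/-- The action of `P` on `A` induced by a coaction `ρ : A → A ⊗ Q` of `Q` on `A`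
via the pairing between `P` and `Q`: `p · a = (id ⊗ p)(ρ(a))`. -/
def actMap (pair : P →ₗ[ℂ] Q →ₗ[ℂ] ℂ) (ρ : A →ₗ[ℂ] A ⊗[ℂ] Q) : P →ₗ[ℂ] A →ₗ[ℂ] A :=
  (LinearMap.lcomp ℂ A ρ) ∘ₗ (rmapL A Q) ∘ₗ pair

/-- The `A`-valued 2-form `(p, p') ↦ û(p, p') = (id ⊗ p ⊗ p')(u)` associated with a
unitary `u ∈ A ⊗ Q ⊗ Q`. -/
def uhatL (pair : P →ₗ[ℂ] Q →ₗ[ℂ] ℂ) (u : (A ⊗[ℂ] Q) ⊗[ℂ] Q) : P →ₗ[ℂ] P →ₗ[ℂ] A :=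
  (LinearMap.lcomp ℂ A ((LinearMap.applyₗ u) ∘ₗ (rmapL (A ⊗[ℂ] Q) Q) ∘ₗ pair)) ∘ₗ
    (rmapL A Q) ∘ₗ pair

/-- `C`, via the linear bijection `Φ : A ⊗ P ≃ C`, `a ⊗ p ↦ a ⋊ p`, is the twisted
crossed product `A ⋊_{ρ,u} P` of `A` by the twisted coaction `(ρ, u)` of `Q` on `A`,
`P` being paired with `Q` by `pair`.  (Take `u = 1` for untwisted crossed products.) -/
structure IsCrossedProduct (ΔP : P →ₗ[ℂ] P ⊗[ℂ] P) (pair : P →ₗ[ℂ] Q →ₗ[ℂ] ℂ)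
    (ρ : A →ₗ[ℂ] A ⊗[ℂ] Q) (u : (A ⊗[ℂ] Q) ⊗[ℂ] Q)
    (Φ : (A ⊗[ℂ] P) ≃ₗ[ℂ] C) : Prop where
  emb_mul : ∀ a b : A, Φ (a ⊗ₜ[ℂ] (1 : P)) * Φ (b ⊗ₜ[ℂ] (1 : P)) = Φ ((a * b) ⊗ₜ[ℂ] (1 : P))
  emb_one : Φ ((1 : A) ⊗ₜ[ℂ] (1 : P)) = 1
  emb_star : ∀ a : A, star (Φ (a ⊗ₜ[ℂ] (1 : P))) = Φ (star a ⊗ₜ[ℂ] (1 : P))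
  factor : ∀ (a : A) (p : P), Φ (a ⊗ₜ[ℂ] p) = Φ (a ⊗ₜ[ℂ] (1 : P)) * Φ ((1 : A) ⊗ₜ[ℂ] p)
  commutation : ∀ (p : P) (a : A),
    Φ ((1 : A) ⊗ₜ[ℂ] p) * Φ (a ⊗ₜ[ℂ] (1 : P))
      = Φ ((TensorProduct.map ((actMap pair ρ).flip a) LinearMap.id) (ΔP p))
  jmul : ∀ p p' : P,
    Φ ((1 : A) ⊗ₜ[ℂ] p) * Φ ((1 : A) ⊗ₜ[ℂ] p')
      = Φ ((TensorProduct.map (TensorProduct.lift (uhatL pair u)) (LinearMap.mul' ℂ P))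
          ((TensorProduct.tensorTensorTensorComm ℂ P P P P) (ΔP p ⊗ₜ[ℂ] ΔP p')))

/-- Compatibility of the star of the crossed product with the star of `P`
(valid for untwisted crossed products): `(1 ⋊ p)* = 1 ⋊ p*`. -/
def CPJStarCompat [StarRing P] (Φ : (A ⊗[ℂ] P) ≃ₗ[ℂ] C) : Prop :=
  ∀ p : P, star (Φ ((1 : A) ⊗ₜ[ℂ] p)) = Φ ((1 : A) ⊗ₜ[ℂ] star p)

/-- The canonical conditional expectation `E₁ : A ⋊ P → A`, `a ⋊ p ↦ ⟨p, τ⟩ a`,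
where `τ` is the distinguished projection of `Q`. -/
def cpExpect (pair : P →ₗ[ℂ] Q →ₗ[ℂ] ℂ) (τ : Q) (Φ : (A ⊗[ℂ] P) ≃ₗ[ℂ] C) : C →ₗ[ℂ] A :=
  (rmap (pair.flip τ)) ∘ₗ Φ.symm.toLinearMap

/-- The dual coaction of `P` on the crossed product `C = A ⋊ P`:
`a ⋊ p ↦ (a ⋊ p₍₁₎) ⊗ p₍₂₎`. -/
def dualCoaction (ΔP : P →ₗ[ℂ] P ⊗[ℂ] P) (Φ : (A ⊗[ℂ] P) ≃ₗ[ℂ] C) : C →ₗ[ℂ] C ⊗[ℂ] P :=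
  (TensorProduct.map Φ.toLinearMap LinearMap.id) ∘ₗ
    (TensorProduct.assoc ℂ A P P).symm.toLinearMap ∘ₗ
      (TensorProduct.map LinearMap.id ΔP) ∘ₗ Φ.symm.toLinearMap

end CrossedProduct

section SequenceAlgebra

variable (A : Type*) [NormedRing A] [StarRing A] [CStarRing A] [NormedAlgebra ℂ A]
  [StarModule ℂ A]

/-- The algebra of bounded sequences `ℓ^∞(ℕ, A)`. -/
def bddSeq : Subalgebra ℂ (ℕ → A) where
  carrier := {f | ∃ C, ∀ n, ‖f n‖ ≤ C}
  mul_mem' := by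
    rintro f g ⟨Cf, hf⟩ ⟨Cg, hg⟩
    exact ⟨Cf * Cg, fun n => le_trans (norm_mul_le _ _)
      (mul_le_mul (hf n) (hg n) (norm_nonneg _) (le_trans (norm_nonneg _) (hf n)))⟩
  add_mem' := by
    rintro f g ⟨Cf, hf⟩ ⟨Cg, hg⟩
    exact ⟨Cf + Cg, fun n => le_trans (norm_add_le _ _) (add_le_add (hf n) (hg n))⟩
  algebraMap_mem' := fun c => ⟨‖algebraMap ℂ A c‖, fun n => le_of_eq (by
    rw [Pi.algebraMap_apply])⟩

instance : StarRing (bddSeq A) where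
  star f := ⟨star (f : ℕ → A), by
    obtain ⟨C, hC⟩ := f.2
    exact ⟨C, fun n => by simpa only [Pi.star_apply, norm_star] using hC n⟩⟩
  star_involutive f := Subtype.ext (star_star (f : ℕ → A))
  star_mul f g := Subtype.ext (star_mul (f : ℕ → A) (g : ℕ → A))
  star_add f g := Subtype.ext (star_add (f : ℕ → A) (g : ℕ → A))

/-- The congruence relation of asymptotic equality (modulo `c₀(ℕ, A)`). -/
def nullCon : RingCon (bddSeq A) where
  r f g := Tendsto (fun n => ‖(f : ℕ → A) n - (g : ℕ → A) n‖) atTop (nhds 0)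
  iseqv := by
    refine ⟨fun f => ?_, fun {f g} h => ?_, fun {f g h} h1 h2 => ?_⟩
    · simpa using tendsto_const_nhds
    · simpa [norm_sub_rev] using h
    · refine squeeze_zero (fun n => norm_nonneg _) (fun n => ?_) (by simpa using h1.add h2)
      calc ‖(f : ℕ → A) n - (h : ℕ → A) n‖
          = ‖((f : ℕ → A) n - (g : ℕ → A) n) + ((g : ℕ → A) n - (h : ℕ → A) n)‖ := by
            rw [sub_add_sub_cancel]
        _ ≤ ‖(f : ℕ → A) n - (g : ℕ → A) n‖ + ‖(g : ℕ → A) n - (h : ℕ → A) n‖ :=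
            norm_add_le _ _
  mul' := by
    rintro w x y z h1 h2
    obtain ⟨Cw, hCw⟩ := w.2
    obtain ⟨Cz, hCz⟩ := z.2
    refine squeeze_zero (fun n => norm_nonneg _) (fun n => ?_)
      (by simpa using (h2.const_mul Cw).add (h1.mul_const Cz))
    calc ‖(w : ℕ → A) n * (y : ℕ → A) n - (x : ℕ → A) n * (z : ℕ → A) n‖
        = ‖(w : ℕ → A) n * ((y : ℕ → A) n - (z : ℕ → A) n) +
            ((w : ℕ → A) n - (x : ℕ → A) n) * (z : ℕ → A) n‖ := by
          rw [mul_sub, sub_mul, sub_add_sub_cancel]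
      _ ≤ ‖(w : ℕ → A) n * ((y : ℕ → A) n - (z : ℕ → A) n)‖ +
            ‖((w : ℕ → A) n - (x : ℕ → A) n) * (z : ℕ → A) n‖ := norm_add_le _ _
      _ ≤ ‖(w : ℕ → A) n‖ * ‖(y : ℕ → A) n - (z : ℕ → A) n‖ +
            ‖(w : ℕ → A) n - (x : ℕ → A) n‖ * ‖(z : ℕ → A) n‖ :=
          add_le_add (norm_mul_le _ _) (norm_mul_le _ _)
      _ ≤ Cw * ‖(y : ℕ → A) n - (z : ℕ → A) n‖ +
            ‖(w : ℕ → A) n - (x : ℕ → A) n‖ * Cz :=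
          add_le_add (mul_le_mul_of_nonneg_right (hCw n) (norm_nonneg _))
            (mul_le_mul_of_nonneg_left (hCz n) (norm_nonneg _))
  add' := by
    rintro w x y z h1 h2
    refine squeeze_zero (fun n => norm_nonneg _) (fun n => ?_) (by simpa using h1.add h2)
    calc ‖((w : ℕ → A) n + (y : ℕ → A) n) - ((x : ℕ → A) n + (z : ℕ → A) n)‖
        = ‖((w : ℕ → A) n - (x : ℕ → A) n) + ((y : ℕ → A) n - (z : ℕ → A) n)‖ := by
          rw [add_sub_add_comm]
      _ ≤ ‖(w : ℕ → A) n - (x : ℕ → A) n‖ + ‖(y : ℕ → A) n - (z : ℕ → A) n‖ := norm_add_le _ _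

/-- The sequence algebra `A^∞ = ℓ^∞(ℕ, A) / c₀(ℕ, A)`. -/
abbrev Ainfty := (nullCon A).Quotient

/-- The quotient map `ℓ^∞(ℕ, A) → A^∞`. -/
def aiMk (f : bddSeq A) : Ainfty A := Quot.mk _ f

lemma aiMk_surjective : Function.Surjective (aiMk A) := fun x => by
  obtain ⟨f, rfl⟩ := Quot.exists_rep x
  exact ⟨f, rfl⟩

lemma aiMk_mul (f g : bddSeq A) : aiMk A (f * g) = aiMk A f * aiMk A g := rfl
lemma aiMk_add (f g : bddSeq A) : aiMk A (f + g) = aiMk A f + aiMk A g := rfl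
lemma aiMk_one : aiMk A 1 = 1 := rfl

instance : StarRing (Ainfty A) where
  star := Quot.map star (fun f g h => by
    have h' : Tendsto (fun n => ‖(f : ℕ → A) n - (g : ℕ → A) n‖) atTop (nhds 0) := h
    show Tendsto (fun n => ‖(star f : ℕ → A) n - (star g : ℕ → A) n‖) atTop (nhds 0)
    have : ∀ n, ‖(star f : ℕ → A) n - (star g : ℕ → A) n‖
        = ‖(f : ℕ → A) n - (g : ℕ → A) n‖ := fun n => by
      show ‖star ((f : ℕ → A) n) - star ((g : ℕ → A) n)‖ = _
      rw [← star_sub, norm_star]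
    simpa only [this] using h')
  star_involutive := by
    intro x
    obtain ⟨f, rfl⟩ := aiMk_surjective A x
    show aiMk A (star (star f)) = aiMk A f
    rw [star_star]
  star_mul := by
    intro x y
    obtain ⟨f, rfl⟩ := aiMk_surjective A x
    obtain ⟨g, rfl⟩ := aiMk_surjective A y
    show aiMk A (star (f * g)) = aiMk A (star g) * aiMk A (star f)
    rw [star_mul, aiMk_mul]
  star_add := by
    intro x y
    obtain ⟨f, rfl⟩ := aiMk_surjective A x
    obtain ⟨g, rfl⟩ := aiMk_surjective A y
    show aiMk A (star (f + g)) = aiMk A (star f) + aiMk A (star g)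
    rw [star_add, aiMk_add]

@[simp] lemma star_aiMk (f : bddSeq A) : star (aiMk A f) = aiMk A (star f) := rfl

/-- The constant sequence `a, a, a, …` as an element of `ℓ^∞(ℕ, A)`. -/
def bddConst (a : A) : bddSeq A := ⟨fun _ => a, ⟨‖a‖, fun _ => le_rfl⟩⟩

/-- The canonical embedding `A → A^∞` by constant sequences, as a linear map. -/
def aiLin : A →ₗ[ℂ] Ainfty A where
  toFun a := aiMk A (bddConst A a)
  map_add' a b := by
    have h : bddConst A (a + b) = bddConst A a + bddConst A b :=
      Subtype.ext (funext fun _ => rfl)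
    show aiMk A (bddConst A (a + b)) = aiMk A (bddConst A a) + aiMk A (bddConst A b)
    rw [h, aiMk_add]
  map_smul' c a := by
    have h : bddConst A (c • a) = c • bddConst A a := Subtype.ext (funext fun _ => rfl)
    show aiMk A (bddConst A (c • a)) = c • aiMk A (bddConst A a)
    rw [h]
    rfl

/-- `p` is a projection in `A_∞ = A^∞ ∩ A'`. -/
def IsProjectionInAInfty (p : Ainfty A) : Prop :=
  star p = p ∧ p * p = p ∧ ∀ a : A, p * aiLin A a = aiLin A a * p

end SequenceAlgebra

section Infinity

variable {A P Q : Type*} [NormedRing A] [StarRing A] [CStarRing A] [NormedAlgebra ℂ A]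
  [StarModule ℂ A] [Ring P] [Algebra ℂ P] [Ring Q] [Algebra ℂ Q]

/-- `ρS` is the map induced entrywise by `ρ` on the sequence algebra `A^∞`
(identifying `(A ⊗ Q)^∞` with `A^∞ ⊗ Q`, `Q` being finite dimensional;
the identification is expressed by slicing with all functionals `pair p`, `p ∈ P`). -/
def IsInducedSeqMap (pair : P →ₗ[ℂ] Q →ₗ[ℂ] ℂ) (ρ : A → A ⊗[ℂ] Q)
    (ρS : Ainfty A →ₗ[ℂ] Ainfty A ⊗[ℂ] Q) : Prop :=
  (∀ a : A, ρS (aiLin A a) = TensorProduct.map (aiLin A) LinearMap.id (ρ a)) ∧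
  ∀ (f : bddSeq A) (p : P), ∃ g : bddSeq A,
    (∀ n, (g : ℕ → A) n = rmap (pair p) (ρ ((f : ℕ → A) n))) ∧
    rmap (pair p) (ρS (aiMk A f)) = aiMk A g

/-- `w ∈ A^∞ ⊗ Q` witnesses approximate representability of the coaction `ρ` of `Q`
on `A` (`ρS` is the induced coaction on `A^∞`, `stS` the star of `A^∞ ⊗ Q`). -/
structure IsARWitness (ΔQ : Q →ₗ[ℂ] Q ⊗[ℂ] Q) (ρ : A → A ⊗[ℂ] Q)
    (ρS : Ainfty A →ₗ[ℂ] Ainfty A ⊗[ℂ] Q)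
    (stS : Ainfty A ⊗[ℂ] Q → Ainfty A ⊗[ℂ] Q) (w : Ainfty A ⊗[ℂ] Q) : Prop where
  unitary : IsUnitaryWith stS w
  implement : ∀ a : A,
    TensorProduct.map (aiLin A) LinearMap.id (ρ a)
      = w * ((aiLin A a) ⊗ₜ[ℂ] (1 : Q)) * stS w
  cocycle_triv : (w ⊗ₜ[ℂ] (1 : Q)) *
      (TensorProduct.map ((TensorProduct.mk ℂ (Ainfty A) Q).flip 1) LinearMap.id w)
    = (TensorProduct.assoc ℂ (Ainfty A) Q Q).symm (TensorProduct.map LinearMap.id ΔQ w)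
  cocycle_seq : (TensorProduct.map ρS LinearMap.id w) * (w ⊗ₜ[ℂ] (1 : Q))
    = (TensorProduct.assoc ℂ (Ainfty A) Q Q).symm (TensorProduct.map LinearMap.id ΔQ w)

/-- `w ∈ A^∞ ⊗ Q` witnesses approximate representability of the twisted coaction
`(ρ, u)` of `Q` on `A` (Definition 4.3 of the paper). -/
structure IsTwistedARWitness (ΔQ : Q →ₗ[ℂ] Q ⊗[ℂ] Q) (ρ : A → A ⊗[ℂ] Q)
    (u : (A ⊗[ℂ] Q) ⊗[ℂ] Q) (ρS : Ainfty A →ₗ[ℂ] Ainfty A ⊗[ℂ] Q)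
    (stS : Ainfty A ⊗[ℂ] Q → Ainfty A ⊗[ℂ] Q) (w : Ainfty A ⊗[ℂ] Q) : Prop where
  unitary : IsUnitaryWith stS w
  implement : ∀ a : A,
    TensorProduct.map (aiLin A) LinearMap.id (ρ a)
      = w * ((aiLin A a) ⊗ₜ[ℂ] (1 : Q)) * stS w
  cocycle_triv :
    TensorProduct.map (TensorProduct.map (aiLin A) LinearMap.id) LinearMap.id u
      = (w ⊗ₜ[ℂ] (1 : Q)) *
          (TensorProduct.map ((TensorProduct.mk ℂ (Ainfty A) Q).flip 1) LinearMap.id w) *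
          ((TensorProduct.assoc ℂ (Ainfty A) Q Q).symm
            (TensorProduct.map LinearMap.id ΔQ (stS w)))
  cocycle_seq :
    TensorProduct.map (TensorProduct.map (aiLin A) LinearMap.id) LinearMap.id u
      = (TensorProduct.map ρS LinearMap.id w) * (w ⊗ₜ[ℂ] (1 : Q)) *
          ((TensorProduct.assoc ℂ (Ainfty A) Q Q).symm
            (TensorProduct.map LinearMap.id ΔQ (stS w)))

end Infinity

section Rohlin

variable {A P Q C CS : Type*}
  [NormedRing A] [StarRing A] [CStarRing A] [NormedAlgebra ℂ A] [StarModule ℂ A]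
  [Ring P] [Algebra ℂ P] [Ring Q] [Algebra ℂ Q]
  [Ring C] [Algebra ℂ C] [StarRing C] [Ring CS] [Algebra ℂ CS] [StarRing CS]

/-- The canonical embedding of the crossed product `C = A ⋊ P` into the crossed
product `CS = A^∞ ⋊ P`. -/
def cpIota (Φ : (A ⊗[ℂ] P) ≃ₗ[ℂ] C) (ΦS : (Ainfty A ⊗[ℂ] P) ≃ₗ[ℂ] CS) : C →ₗ[ℂ] CS :=
  ΦS.toLinearMap ∘ₗ (TensorProduct.map (aiLin A) LinearMap.id) ∘ₗ Φ.symm.toLinearMap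

/-- `w ∈ (A^∞ ⋊ P) ⊗ P` witnesses the Rohlin property of a (twisted) coaction of the
dual of `P` on `A` : it witnesses the approximate representability of the dual
coaction of `P` on `A ⋊ P` (Definition 5.1 of the paper).  Here `Φ` and `ΦS` are
the crossed product structures of `C = A ⋊ P` and `CS = A^∞ ⋊ P`, and `stS` is
the star operation of `CS ⊗ P`. -/
structure IsRohlinWitness (ΔP : P →ₗ[ℂ] P ⊗[ℂ] P)
    (Φ : (A ⊗[ℂ] P) ≃ₗ[ℂ] C) (ΦS : (Ainfty A ⊗[ℂ] P) ≃ₗ[ℂ] CS)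
    (stS : CS ⊗[ℂ] P → CS ⊗[ℂ] P) (w : CS ⊗[ℂ] P) : Prop where
  unitary : IsUnitaryWith stS w
  implement : ∀ x : C,
    TensorProduct.map (cpIota Φ ΦS) LinearMap.id (dualCoaction ΔP Φ x)
      = w * ((cpIota Φ ΦS x) ⊗ₜ[ℂ] (1 : P)) * stS w
  cocycle_triv : (w ⊗ₜ[ℂ] (1 : P)) *
      (TensorProduct.map ((TensorProduct.mk ℂ CS P).flip 1) LinearMap.id w)
    = (TensorProduct.assoc ℂ CS P P).symm (TensorProduct.map LinearMap.id ΔP w)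
  cocycle_seq : (TensorProduct.map (dualCoaction (A := Ainfty A) ΔP ΦS) LinearMap.id w) * (w ⊗ₜ[ℂ] (1 : P))
    = (TensorProduct.assoc ℂ CS P P).symm (TensorProduct.map LinearMap.id ΔP w)

end Rohlin

section Equivalences

variable {A Q : Type*} [Ring A] [Algebra ℂ A] [StarRing A] [Ring Q] [Algebra ℂ Q]

/-- Exterior equivalence of two coactions of `Q` on `A` (Definition 2.2 with trivial
twists): `σ = Ad(v) ∘ ρ` with `(v ⊗ 1)(ρ ⊗ id)(v) = (id ⊗ Δ)(v)`. -/
def CoactExtEquiv (ΔQ : Q →ₗ[ℂ] Q ⊗[ℂ] Q) (st : A ⊗[ℂ] Q → A ⊗[ℂ] Q)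
    (ρ σ : A →ₐ[ℂ] A ⊗[ℂ] Q) : Prop :=
  ∃ v : A ⊗[ℂ] Q, IsUnitaryWith st v ∧ (∀ a, σ a = v * ρ a * st v) ∧
    (v ⊗ₜ[ℂ] (1 : Q)) * (TensorProduct.map ρ.toLinearMap LinearMap.id v)
      = (TensorProduct.assoc ℂ A Q Q).symm (TensorProduct.map LinearMap.id ΔQ v)

/-- Exterior equivalence of two twisted coactions of `Q` on `A` (Definition 2.2). -/
def TwistedExtEquiv (ΔQ : Q →ₗ[ℂ] Q ⊗[ℂ] Q) (st : A ⊗[ℂ] Q → A ⊗[ℂ] Q)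
    (ρ₁ : A →ₐ[ℂ] A ⊗[ℂ] Q) (u₁ : (A ⊗[ℂ] Q) ⊗[ℂ] Q)
    (ρ₂ : A →ₐ[ℂ] A ⊗[ℂ] Q) (u₂ : (A ⊗[ℂ] Q) ⊗[ℂ] Q) : Prop :=
  ∃ v : A ⊗[ℂ] Q, IsUnitaryWith st v ∧ (∀ a, ρ₂ a = v * ρ₁ a * st v) ∧
    u₂ = (v ⊗ₜ[ℂ] (1 : Q)) * (TensorProduct.map ρ₁.toLinearMap LinearMap.id v) * u₁ *
      ((TensorProduct.assoc ℂ A Q Q).symm (TensorProduct.map LinearMap.id ΔQ (st v)))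

/-- Murray - von Neumann equivalence of projections, with respect to an abstract
involution `st`. -/
def MvNEquivWith {D : Type*} [Ring D] (st : D → D) (p q : D) : Prop :=
  ∃ v : D, st v * v = p ∧ v * st v = q

end Equivalences

section FixedPoints

/-- The fixed point algebra `A^ρ = {a ∈ A : ρ(a) = a ⊗ 1}` of a (weak) coaction. -/
def fixedPointAlgebra {A Q : Type*} [Ring A] [Algebra ℂ A] [StarRing A] [StarModule ℂ A]
    [Ring Q] [Algebra ℂ Q] [StarRing Q] (ρ : A →ₐ[ℂ] A ⊗[ℂ] Q) (st : A ⊗[ℂ] Q → A ⊗[ℂ] Q)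
    (hst : IsTensorStarMap (star) (star) st) (hρ : ∀ a, ρ (star a) = st (ρ a)) :
    StarSubalgebra ℂ A where
  carrier := {a | ρ a = a ⊗ₜ[ℂ] (1 : Q)}
  mul_mem' := fun {a b} ha hb => by
    show ρ (a * b) = (a * b) ⊗ₜ[ℂ] (1 : Q)
    rw [map_mul, ha, hb, Algebra.TensorProduct.tmul_mul_tmul, mul_one]
  one_mem' := by
    show ρ 1 = (1 : A) ⊗ₜ[ℂ] (1 : Q)
    rw [map_one, Algebra.TensorProduct.one_def]
  add_mem' := fun {a b} ha hb => by
    show ρ (a + b) = (a + b) ⊗ₜ[ℂ] (1 : Q)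
    rw [map_add, ha, hb, TensorProduct.add_tmul]
  zero_mem' := by
    show ρ 0 = (0 : A) ⊗ₜ[ℂ] (1 : Q)
    rw [map_zero, TensorProduct.zero_tmul]
  algebraMap_mem' := fun c => by
    show ρ (algebraMap ℂ A c) = algebraMap ℂ A c ⊗ₜ[ℂ] (1 : Q)
    rw [AlgHom.commutes, Algebra.TensorProduct.algebraMap_apply]
  star_mem' := fun {a} ha => by
    show ρ (star a) = star a ⊗ₜ[ℂ] (1 : Q)
    rw [hρ, ha, hst.2, star_one]

end FixedPoints

section Misc

/-- `ν` is a C*-cross norm on the algebraic tensor product `A ⊗ B` (with involution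
`st`). -/
structure IsCrossNorm {A B : Type*} [NormedRing A] [NormedRing B]
    [Algebra ℂ A] [Algebra ℂ B] (st : A ⊗[ℂ] B → A ⊗[ℂ] B)
    (ν : A ⊗[ℂ] B → ℝ) : Prop where
  nonneg : ∀ x, 0 ≤ ν x
  eq_zero : ∀ x, ν x = 0 ↔ x = 0
  add_le : ∀ x y, ν (x + y) ≤ ν x + ν y
  smul : ∀ (c : ℂ) x, ν (c • x) = ‖c‖ * ν x
  mul_le : ∀ x y, ν (x * y) ≤ ν x * ν y
  cstar : ∀ x, ν (st x * x) = ν x * ν x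
  cross : ∀ (a : A) (b : B), ν (a ⊗ₜ[ℂ] b) = ‖a‖ * ‖b‖

variable (A : Type*) [NormedRing A] [StarRing A] [CStarRing A] [NormedAlgebra ℂ A]
  [StarModule ℂ A]

/-- `A` is a UHF algebra of type `N^∞`: the closure of an increasing union of unital
`*`-subalgebras isomorphic to `M_{N^n}(ℂ)`. -/
def IsUHFOfType (N : ℕ) : Prop :=
  ∃ S : ℕ → StarSubalgebra ℂ A, Monotone S ∧
    (∀ n, Nonempty ((S n) ≃⋆ₐ[ℂ] Matrix (Fin (N ^ n)) (Fin (N ^ n)) ℂ)) ∧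
    Dense (⋃ n, (S n : Set A))

/-- `θ` is an approximately inner automorphism of `A`. -/
def IsApproxInner (θ : A ≃ₐ[ℂ] A) : Prop :=
  ∃ u : ℕ → A, (∀ n, IsUnitaryWith (star) (u n)) ∧
    ∀ a : A, Tendsto (fun n => ‖θ a - u n * a * star (u n)‖) atTop (nhds 0)

end Misc

end Paper
/-- The comultiplication of `C(G)`: `Δ(f)(s, t) = f(st)`. -/
noncomputable def cgComul (G : Type*) [Group G] [Fintype G] [DecidableEq G] :
    (G → ℂ) →ₗ[ℂ] (G → ℂ) ⊗[ℂ] (G → ℂ) :=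
  ∑ s : G, ∑ t : G, (LinearMap.proj (s * t)).smulRight
    ((Pi.single s 1 : G → ℂ) ⊗ₜ[ℂ] (Pi.single t 1 : G → ℂ))

/-- The evaluation pairing of `C(G)` with itself: `⟨f, g⟩ = Σ_t f(t) g(t)`. -/
noncomputable def evalPair (G : Type*) [Fintype G] :
    (G → ℂ) →ₗ[ℂ] (G → ℂ) →ₗ[ℂ] ℂ :=
  ∑ t : G, (LinearMap.proj t).smulRight (LinearMap.proj t)

/-- The coaction of `C(G)` on `A` induced by an action `α` of a finite group `G`:
`a ↦ Σ_t α_t(a) ⊗ δ_t`. -/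
noncomputable def grpCoact {G A : Type*} [Group G] [Fintype G] [DecidableEq G]
    [Ring A] [Algebra ℂ A] (α : G →* (A ≃ₐ[ℂ] A)) :
    A →ₗ[ℂ] A ⊗[ℂ] (G → ℂ) :=
  ∑ t : G, ((TensorProduct.mk ℂ A (G → ℂ)).flip (Pi.single t 1)) ∘ₗ (α t).toLinearMap

/-! Since `C(G)` is spanned by the orthogonal minimal projections `δ_t`, the slices
`w ↦ (id ⊗ ev_t)(w)` form an algebra isomorphism `A^∞ ⊗ C(G) ≃ (G → A^∞)`
(`piScalarRight`), under which `w = Σ_t U_t ⊗ δ_t` corresponds to `U`. Through it, `w` is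
unitary iff every `U_t` is, `w` implements the coaction iff `Ad U_t = α_t` on `A`, the
cocycle identity `(w ⊗ 1)(ρ_triv ⊗ id)(w) = (id ⊗ Δ)(w)` reads `U_s U_t = U_{st}`, and
`(ρ^∞ ⊗ id)(w)(w ⊗ 1) = (id ⊗ Δ)(w)` reads `α^∞_s(U_t) U_s = U_{st}`, which for a
representation by unitaries is the equivariance `α^∞_s(U_t) = U_{sts⁻¹}`. -/

namespace Paper

open Algebra.TensorProduct (piScalarRight piScalarRight_tmul_apply)

lemma IsUnitaryWith.isUnit {C : Type*} [Monoid C] {st : C → C} {u : C}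
    (h : IsUnitaryWith st u) : IsUnit u :=
  ⟨⟨u, st u, h.2, h.1⟩, rfl⟩

section Representations

variable {G R : Type*} [Group G] [Monoid R] {U : G → R}

lemma map_one_of_map_mul (hU : IsUnit (U 1)) (hmul : ∀ s t, U s * U t = U (s * t)) :
    U 1 = 1 :=
  hU.mul_eq_right.1 (by rw [hmul, one_mul])

lemma mul_eq_map_mul_iff_eq_conj {s : G} (hU : IsUnit (U s))
    (hmul : ∀ s t, U s * U t = U (s * t)) (t : G) (x : R) :
    x * U s = U (s * t) ↔ x = U (s * t * s⁻¹) := by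
  rw [show U (s * t) = U (s * t * s⁻¹) * U s by rw [hmul, inv_mul_cancel_right],
    hU.mul_left_inj]

end Representations

section Expansion

variable {G : Type*} [Fintype G] [DecidableEq G] {B B' : Type*} [Ring B] [Algebra ℂ B]
  [Ring B'] [Algebra ℂ B']

lemma piScalarRight_symm_eq_sum (U : G → B) :
    (piScalarRight ℂ ℂ B G).symm U = ∑ t, U t ⊗ₜ[ℂ] (Pi.single t 1 : G → ℂ) := by
  rw [AlgEquiv.symm_apply_eq]
  funext s
  simp [Finset.sum_apply, Pi.single_apply]

lemma rmap_evalPair_single (z : B ⊗[ℂ] (G → ℂ)) (s : G) :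
    rmap (evalPair G (Pi.single s 1)) z = piScalarRight ℂ ℂ B G z s := by
  induction z using TensorProduct.induction_on with
  | zero => simp
  | tmul b f => simp [evalPair, Pi.single_apply]
  | add x y hx hy => simp [hx, hy]

lemma piScalarRight_map (f : B →ₗ[ℂ] B') (z : B ⊗[ℂ] (G → ℂ)) :
    piScalarRight ℂ ℂ B' G (TensorProduct.map f LinearMap.id z)
      = fun t => f (piScalarRight ℂ ℂ B G z t) := by
  induction z using TensorProduct.induction_on with
  | zero => funext t; simp
  | tmul b f => funext t; simp
  | add x y hx hy => funext t; simp [hx, hy]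

lemma piScalarRight_star_of_isTensorStarMap [StarRing B]
    {st : B ⊗[ℂ] (G → ℂ) → B ⊗[ℂ] (G → ℂ)} (hst : IsTensorStarMap star star st)
    (z : B ⊗[ℂ] (G → ℂ)) :
    piScalarRight ℂ ℂ B G (st z) = star (piScalarRight ℂ ℂ B G z) := by
  have hsum : st z = (piScalarRight ℂ ℂ B G).symm (star (piScalarRight ℂ ℂ B G z)) := by
    conv_lhs => rw [← (piScalarRight ℂ ℂ B G).symm_apply_apply z, piScalarRight_symm_eq_sum]
    rw [piScalarRight_symm_eq_sum]
    refine (map_sum (AddMonoidHom.mk' st hst.1) _ _).trans (Finset.sum_congr rfl fun t _ => ?_)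
    simp [hst.2]
  rw [hsum, AlgEquiv.apply_symm_apply]

lemma isUnitaryWith_iff_piScalarRight [StarRing B] {st : B ⊗[ℂ] (G → ℂ) → B ⊗[ℂ] (G → ℂ)}
    (hst : IsTensorStarMap star star st) (z : B ⊗[ℂ] (G → ℂ)) :
    IsUnitaryWith st z ↔ ∀ t, IsUnitaryWith star (piScalarRight ℂ ℂ B G z t) := by
  simp only [IsUnitaryWith, ← (piScalarRight ℂ ℂ B G).injective.eq_iff, map_mul, map_one,
    piScalarRight_star_of_isTensorStarMap hst, funext_iff, Pi.mul_apply, Pi.star_apply, Pi.one_apply,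
    forall_and]

lemma eq_iff_piScalarRight₂ {z z' : (B ⊗[ℂ] (G → ℂ)) ⊗[ℂ] (G → ℂ)} :
    z = z' ↔ ∀ s t, piScalarRight ℂ ℂ B G (piScalarRight ℂ ℂ _ G z t) s
      = piScalarRight ℂ ℂ B G (piScalarRight ℂ ℂ _ G z' t) s := by
  rw [← (piScalarRight ℂ ℂ _ G).injective.eq_iff, funext_iff]
  simp only [← (piScalarRight ℂ ℂ B G).injective.eq_iff, funext_iff]
  exact forall_comm

end Expansion

section GroupCoefficients

variable {G : Type*} [Group G] [Fintype G] [DecidableEq G] {B : Type*} [Ring B] [Algebra ℂ B]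

lemma cgComul_apply (f : G → ℂ) :
    cgComul G f = ∑ s, ∑ t, f (s * t) • (Pi.single s 1 : G → ℂ) ⊗ₜ[ℂ] (Pi.single t 1 : G → ℂ) := by
  simp [cgComul]

lemma piScalarRight_assoc_symm_map_cgComul (z : B ⊗[ℂ] (G → ℂ)) (s t : G) :
    piScalarRight ℂ ℂ B G (piScalarRight ℂ ℂ _ G ((TensorProduct.assoc ℂ B (G → ℂ) (G → ℂ)).symm
        (TensorProduct.map LinearMap.id (cgComul G) z)) t) s
      = piScalarRight ℂ ℂ B G z (s * t) := by
  induction z using TensorProduct.induction_on with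
  | zero => simp
  | tmul b f => simp [cgComul_apply, TensorProduct.tmul_sum, Finset.sum_apply, Pi.single_apply]
  | add x y hx hy => simp [hx, hy]

lemma cocycle_triv_cgComul_iff (z : B ⊗[ℂ] (G → ℂ)) :
    (z ⊗ₜ[ℂ] (1 : G → ℂ)) *
        TensorProduct.map ((TensorProduct.mk ℂ B (G → ℂ)).flip 1) LinearMap.id z
      = (TensorProduct.assoc ℂ B (G → ℂ) (G → ℂ)).symm
          (TensorProduct.map LinearMap.id (cgComul G) z) ↔
      ∀ s t, piScalarRight ℂ ℂ B G z s * piScalarRight ℂ ℂ B G z t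
        = piScalarRight ℂ ℂ B G z (s * t) := by
  rw [eq_iff_piScalarRight₂]
  simp [piScalarRight_map, piScalarRight_assoc_symm_map_cgComul]

lemma cocycle_seq_cgComul_iff {ρ : B →ₗ[ℂ] B ⊗[ℂ] (G → ℂ)} {σ : G → B → B}
    (hρ : ∀ x, piScalarRight ℂ ℂ B G (ρ x) = fun t => σ t x) (z : B ⊗[ℂ] (G → ℂ)) :
    TensorProduct.map ρ LinearMap.id z * (z ⊗ₜ[ℂ] (1 : G → ℂ))
      = (TensorProduct.assoc ℂ B (G → ℂ) (G → ℂ)).symm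
          (TensorProduct.map LinearMap.id (cgComul G) z) ↔
      ∀ s t, σ s (piScalarRight ℂ ℂ B G z t) * piScalarRight ℂ ℂ B G z s
        = piScalarRight ℂ ℂ B G z (s * t) := by
  rw [eq_iff_piScalarRight₂]
  simp [piScalarRight_map, piScalarRight_assoc_symm_map_cgComul, hρ]

lemma piScalarRight_grpCoact (α : G →* (B ≃ₐ[ℂ] B)) (b : B) :
    piScalarRight ℂ ℂ B G (grpCoact α b) = fun t => α t b := by
  funext t
  simp [grpCoact, Finset.sum_apply, Pi.single_apply]

lemma grpCoact_implemented_iff {C : Type*} [Ring C] [Algebra ℂ C] [StarRing B]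
    {st : B ⊗[ℂ] (G → ℂ) → B ⊗[ℂ] (G → ℂ)} (hst : IsTensorStarMap star star st)
    (α : G →* (C ≃ₐ[ℂ] C)) (ι : C →ₗ[ℂ] B) (z : B ⊗[ℂ] (G → ℂ)) :
    (∀ c, TensorProduct.map ι LinearMap.id (grpCoact α c)
        = z * (ι c ⊗ₜ[ℂ] (1 : G → ℂ)) * st z) ↔
      ∀ t c, ι (α t c) = piScalarRight ℂ ℂ B G z t * ι c * star (piScalarRight ℂ ℂ B G z t) := by
  simp only [← (piScalarRight ℂ ℂ B G).injective.eq_iff, map_mul, piScalarRight_map,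
    piScalarRight_grpCoact, piScalarRight_star_of_isTensorStarMap hst, funext_iff, Pi.mul_apply,
    Pi.star_apply, piScalarRight_tmul_apply, Pi.one_apply, one_smul]
  exact forall_comm

end GroupCoefficients

section SequenceAlgebra

variable {G A : Type*} [Group G] [Fintype G] [DecidableEq G]
  [NormedRing A] [StarRing A] [CStarRing A] [NormedAlgebra ℂ A] [StarModule ℂ A]
  {α : G →* (A ≃ₐ[ℂ] A)} {αS : G →* (Ainfty A ≃ₐ[ℂ] Ainfty A)}
  {ρS : Ainfty A →ₗ[ℂ] Ainfty A ⊗[ℂ] (G → ℂ)}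

lemma piScalarRight_inducedSeqMap_grpCoact
    (hαS : ∀ (t : G) (f : bddSeq A), ∃ g : bddSeq A,
      (∀ n, (g : ℕ → A) n = α t ((f : ℕ → A) n)) ∧ αS t (aiMk A f) = aiMk A g)
    (hρS : IsInducedSeqMap (evalPair G) (⇑(grpCoact α)) ρS) (x : Ainfty A) :
    piScalarRight ℂ ℂ _ G (ρS x) = fun t => αS t x := by
  obtain ⟨f, rfl⟩ := aiMk_surjective A x
  funext t
  obtain ⟨g, hg, hρg⟩ := hρS.2 f (Pi.single t 1)
  obtain ⟨g', hg', hαg'⟩ := hαS t f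
  rw [← rmap_evalPair_single (B := Ainfty A), hρg, hαg']
  congr 1
  ext n
  rw [hg, hg', rmap_evalPair_single, piScalarRight_grpCoact]

variable {stAS : Ainfty A ⊗[ℂ] (G → ℂ) → Ainfty A ⊗[ℂ] (G → ℂ)}

theorem isARWitness_grpCoact_iff
    (hρS : ∀ x, piScalarRight ℂ ℂ (Ainfty A) G (ρS x) = fun t => αS t x)
    (hstAS : IsTensorStarMap (M := Ainfty A) (N := G → ℂ) star star stAS)
    (w : Ainfty A ⊗[ℂ] (G → ℂ)) :
    IsARWitness (cgComul G) (⇑(grpCoact α)) ρS stAS w ↔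
      (∀ t, IsUnitaryWith star (piScalarRight ℂ ℂ (Ainfty A) G w t)) ∧
      (∀ t a, aiLin A (α t a) = piScalarRight ℂ ℂ (Ainfty A) G w t * aiLin A a
          * star (piScalarRight ℂ ℂ (Ainfty A) G w t)) ∧
      (∀ s t, piScalarRight ℂ ℂ (Ainfty A) G w s * piScalarRight ℂ ℂ (Ainfty A) G w t
          = piScalarRight ℂ ℂ (Ainfty A) G w (s * t)) ∧
      (∀ s t, αS s (piScalarRight ℂ ℂ (Ainfty A) G w t) * piScalarRight ℂ ℂ (Ainfty A) G w s
          = piScalarRight ℂ ℂ (Ainfty A) G w (s * t)) := by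
  have h1 := isUnitaryWith_iff_piScalarRight (B := Ainfty A) hstAS w
  have h2 := grpCoact_implemented_iff (B := Ainfty A) hstAS α (aiLin A) w
  have h3 := cocycle_triv_cgComul_iff (B := Ainfty A) w
  have h4 := cocycle_seq_cgComul_iff (B := Ainfty A) (ρ := ρS) (σ := fun t => αS t) hρS
  constructor
  · rintro ⟨hunit, himpl, htriv, hseq⟩
    exact ⟨h1.1 hunit, h2.1 himpl, h3.1 htriv, (h4 w).1 hseq⟩
  · rintro ⟨hunit, himpl, htriv, hseq⟩
    exact ⟨h1.2 hunit, h2.2 himpl, h3.2 htriv, (h4 w).2 hseq⟩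

end SequenceAlgebra
end Paper

open Paper in
theorem stmt3_general {G A : Type*} [Group G] [Fintype G] [DecidableEq G]
    [NormedRing A] [StarRing A] [CStarRing A] [NormedAlgebra ℂ A] [StarModule ℂ A]
    (α : G →* (A ≃ₐ[ℂ] A))
    -- the induced action α^∞ of G on A^∞
    (αS : G →* (Ainfty A ≃ₐ[ℂ] Ainfty A))
    (hαS : ∀ (t : G) (f : bddSeq A), ∃ g : bddSeq A,
      (∀ n, (g : ℕ → A) n = α t ((f : ℕ → A) n)) ∧ αS t (aiMk A f) = aiMk A g)
    -- the induced coaction of C(G) on A^∞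
    (ρS : Ainfty A →ₗ[ℂ] Ainfty A ⊗[ℂ] (G → ℂ))
    (hρS : IsInducedSeqMap (evalPair G) (⇑(grpCoact α)) ρS)
    (stAS : Ainfty A ⊗[ℂ] (G → ℂ) → Ainfty A ⊗[ℂ] (G → ℂ))
    (hstAS : IsTensorStarMap (M := Ainfty A) (N := G → ℂ) (star) (star) stAS) :
    (∃ U : G → Ainfty A,
        (∀ t, IsUnitaryWith (star) (U t)) ∧ U 1 = 1 ∧
        (∀ s t : G, U (s * t) = U s * U t) ∧
        (∀ (t : G) (a : A), aiLin A (α t a) = U t * aiLin A a * star (U t)) ∧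
        (∀ s t : G, αS t (U s) = U (t * s * t⁻¹)))
      ↔ ∃ w : Ainfty A ⊗[ℂ] (G → ℂ),
          IsARWitness (cgComul G) (⇑(grpCoact α)) ρS stAS w := by
  have hρ := piScalarRight_inducedSeqMap_grpCoact hαS hρS
  constructor
  · rintro ⟨U, hunit, -, hmul, himpl, hconj⟩
    have hmul' : ∀ s t, U s * U t = U (s * t) := fun s t => (hmul s t).symm
    refine ⟨(Algebra.TensorProduct.piScalarRight ℂ ℂ (Ainfty A) G).symm U,
      (isARWitness_grpCoact_iff hρ hstAS _).2 ?_⟩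
    simp only [AlgEquiv.apply_symm_apply]
    exact ⟨hunit, himpl, hmul', fun s t =>
      (mul_eq_map_mul_iff_eq_conj (hunit s).isUnit hmul' t _).2 (hconj t s)⟩
  · rintro ⟨w, hw⟩
    obtain ⟨hunit, himpl, hmul, hseq⟩ := (isARWitness_grpCoact_iff hρ hstAS w).1 hw
    exact ⟨_, hunit, map_one_of_map_mul (hunit 1).isUnit hmul, fun s t => (hmul s t).symm,
      himpl, fun s t => (mul_eq_map_mul_iff_eq_conj (hunit t).isUnit hmul s _).1 (hseq t s)⟩

open Paper in
/-- A finite group action `α` on `A` is approximately representable in the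
sense of Izumi iff the induced coaction of `C(G)` on `A` is approximately representable. -/
theorem stmt3 {G A : Type*} [Group G] [Fintype G] [DecidableEq G]
    [NormedRing A] [StarRing A] [CStarRing A] [NormedAlgebra ℂ A] [StarModule ℂ A]
    (α : G →* (A ≃ₐ[ℂ] A)) (hαstar : ∀ (t : G) (a : A), α t (star a) = star (α t a))
    -- the induced action α^∞ of G on A^∞
    (αS : G →* (Ainfty A ≃ₐ[ℂ] Ainfty A))
    (hαS : ∀ (t : G) (f : bddSeq A), ∃ g : bddSeq A,
      (∀ n, (g : ℕ → A) n = α t ((f : ℕ → A) n)) ∧ αS t (aiMk A f) = aiMk A g)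
    -- the induced coaction of C(G) on A^∞
    (ρS : Ainfty A →ₗ[ℂ] Ainfty A ⊗[ℂ] (G → ℂ))
    (hρS : IsInducedSeqMap (evalPair G) (⇑(grpCoact α)) ρS)
    (stAS : Ainfty A ⊗[ℂ] (G → ℂ) → Ainfty A ⊗[ℂ] (G → ℂ))
    (hstAS : IsTensorStarMap (M := Ainfty A) (N := G → ℂ) (star) (star) stAS) :
    (∃ U : G → Ainfty A,
        (∀ t, IsUnitaryWith (star) (U t)) ∧ U 1 = 1 ∧
        (∀ s t : G, U (s * t) = U s * U t) ∧
        (∀ (t : G) (a : A), aiLin A (α t a) = U t * aiLin A a * star (U t)) ∧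
        (∀ s t : G, αS t (U s) = U (t * s * t⁻¹)))
      ↔ ∃ w : Ainfty A ⊗[ℂ] (G → ℂ),
          IsARWitness (cgComul G) (⇑(grpCoact α)) ρS stAS w :=
  stmt3_general α αS hαS ρS hρS stAS hstAS
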